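/- Let φ ∈ O_K[x] be Eisenstein of degree n with root α, ρ its ramification polynomial, and R its ramification polygon. For λ = m ∈ ℤ_{>0}, let S_m be the residual polynomial of the (−m)-component of R. Then: (a) if R has a segment S of integral slope −m with left endpoint (k, w) and residual polynomial A, then S_m(x) = x^k·A(x); (b) if R has no segment of slope −m, then S_m(x) = x^{p^s}, where 0 ≤ s ≤ v_p(n) is such that v_α(ρ_{p^s}) + p^s·m = min over 0 ≤ r ≤ v_p(n) of (v_α(ρ_{p^r}) + p^r·m); (c) S_m is an additive polynomial (a 𝕂-sum of monomials of the form c·x^{p^t}); (d) the induced map S_m : 𝕂 → 𝕂 is 𝔽_p-linear. -/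

import Mathlib

/-!
Write `w = v_α` and `ρ_i = ∑_{k=i}^{n} T_{k,i}` with `T_{k,i} = C(k,i) φ_k α^{k-n}`.  Since
`w(T_{k,i}) = n·v(C(k,i) φ_k) + k - n ≡ k (mod n)`, the summands have distinct valuations and
`w(ρ_i) = min_k w(T_{k,i})`.  Let `i` attain `c = min_i (w(ρ_i) + i m)`.  Then `i ≤ p^{v_p(n)}`,
because `w(ρ_{p^{v_p(n)}}) = 0 ≤ w(ρ_i)` and `m > 0`; and `i` is a power of `p`: for the dominant
summand `T_{k,i}` of `ρ_i` there is `p^t ≤ i` with `v_p C(k,p^t) ≤ v_p C(k,i)` (Lucas), so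
`i > p^t` would give `w(ρ_{p^t}) + p^t m < c`.  The coefficient of `x^i` in `S_m` is nonzero exactly
when `i ≤ n` attains `c`, so `S_m` is supported on powers of `p`, hence additive in
characteristic `p`; (a) and (b) are read off the same description of its coefficients.
-/

open Polynomial

namespace RamificationStmt18

variable {K L : Type*} [Field K] [Field L]

def IsEisenstein (v : AddValuation K (WithTop ℤ)) (φ : Polynomial K) : Prop :=
  φ.Monic ∧ (∀ i < φ.natDegree, ((1 : ℤ) : WithTop ℤ) ≤ v (φ.coeff i)) ∧
    v (φ.coeff 0) = ((1 : ℤ) : WithTop ℤ)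

/-- Coefficients of the ramification polynomial `ρ(x) = φ(αx+α)/α^n`. -/
noncomputable def rho [Algebra K L] (φ : Polynomial K) (α : L) (n i : ℕ) : L :=
  ∑ k ∈ Finset.Icc i n, (Nat.choose k i : L) * (algebraMap K L (φ.coeff k)) * α ^ ((k : ℤ) - (n : ℤ))

/-- The valuation ring `O_L = {x | w(x) ≥ 0}`. -/
def vintegers (w : AddValuation L (WithTop ℤ)) : Subring L where
  carrier := {x | 0 ≤ w x}
  zero_mem' := by simp [AddValuation.map_zero]
  one_mem' := by simp [AddValuation.map_one]
  add_mem' := by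
    intro a b ha hb
    exact le_trans (le_min ha hb) (w.map_add a b)
  neg_mem' := by
    intro a ha
    simpa [AddValuation.map_neg] using ha
  mul_mem' := by
    intro a b ha hb
    simp only [Set.mem_setOf_eq] at *
    rw [w.map_mul]
    exact add_nonneg ha hb

open scoped Classical in
/-- Reduction modulo the maximal ideal, extended by `0` outside the valuation ring. -/
noncomputable def vred {𝕜 : Type*} [Field 𝕜] (w : AddValuation L (WithTop ℤ))
    (res : vintegers w →+* 𝕜) (x : L) : 𝕜 :=
  if h : x ∈ vintegers w then res ⟨x, h⟩ else 0

/-- The `α`-content exponent `c = min_{0 ≤ i ≤ n} (v_α(ρ_i) + i·m)` of `ρ(α^m x)`. -/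
noncomputable def contExp [Algebra K L] (w : AddValuation L (WithTop ℤ)) (φ : Polynomial K)
    (α : L) (n m : ℕ) : WithTop ℤ :=
  (Finset.range (n + 1)).inf (fun i => w (rho φ α n i) + ((i * m : ℕ) : WithTop ℤ))

/-- The `α`-content exponent as an integer. -/
noncomputable def contExpZ [Algebra K L] (w : AddValuation L (WithTop ℤ)) (φ : Polynomial K)
    (α : L) (n m : ℕ) : ℤ :=
  WithTop.untopD 0 (contExp w φ α n m)

/-- The residual polynomial `S_m(x) = red(ρ(α^m x)/α^c)` of the `(−m)`-component of the
ramification polygon. -/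
noncomputable def SmPoly {𝕜 : Type*} [Field 𝕜] [Algebra K L] (w : AddValuation L (WithTop ℤ))
    (res : vintegers w →+* 𝕜) (φ : Polynomial K) (α : L) (n m : ℕ) : Polynomial 𝕜 :=
  ∑ i ∈ Finset.range (n + 1),
    Polynomial.C (vred w res (rho φ α n i * α ^ ((i * m : ℤ) - contExpZ w φ α n m))) *
      Polynomial.X ^ i

end RamificationStmt18

namespace Nat

variable {p i k : ℕ} [hp : Fact p.Prime]

theorem not_dvd_choose_pow_mul_sub_one (j : ℕ) {a : ℕ} (ha : 0 < a) :
    ¬ p ∣ (p ^ j * a - 1).choose (p ^ j - 1) := by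
  induction j with
  | zero => simpa using hp.out.one_lt.ne'
  | succ j ih =>
    have hp1 := hp.out.one_lt
    obtain ⟨X, hX⟩ : ∃ X, p ^ j * a = X + 1 :=
      Nat.exists_eq_add_one.2 (Nat.mul_pos (Nat.pow_pos hp.out.pos) ha)
    obtain ⟨Y, hY⟩ : ∃ Y, p ^ j = Y + 1 := Nat.exists_eq_add_one.2 (Nat.pow_pos hp.out.pos)
    have hN : p ^ (j + 1) * a - 1 = (p - 1) + p * (p ^ j * a - 1) := by
      rw [pow_succ', mul_assoc, hX, Nat.add_sub_cancel, mul_add_one]; omega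
    have hK : p ^ (j + 1) - 1 = (p - 1) + p * (p ^ j - 1) := by
      rw [pow_succ', hY, Nat.add_sub_cancel, mul_add_one]; omega
    have hlucas := Choose.choose_modEq_choose_mod_mul_choose_div_nat
      (n := p ^ (j + 1) * a - 1) (k := p ^ (j + 1) - 1) (p := p)
    rw [hN, hK, Nat.add_mul_mod_self_left, Nat.add_mul_div_left _ _ hp.out.pos,
      Nat.add_mul_mod_self_left, Nat.add_mul_div_left _ _ hp.out.pos,
      Nat.mod_eq_of_lt (by omega), Nat.div_eq_of_lt (by omega), Nat.choose_self, one_mul,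
      zero_add, zero_add] at hlucas
    rw [hN, hK, ← Nat.modEq_zero_iff_dvd]
    exact fun h => ih (Nat.modEq_zero_iff_dvd.mp (hlucas.symm.trans h))

theorem padicValNat_choose_add_padicValNat (hik : i ≤ k) (hi : 0 < i) :
    padicValNat p (k.choose i) + padicValNat p i =
      padicValNat p k + padicValNat p ((k - 1).choose (i - 1)) := by
  have hid := Nat.add_one_mul_choose_eq (k - 1) (i - 1)
  rw [Nat.sub_add_cancel (hi.trans_le hik), Nat.sub_add_cancel hi] at hid
  have := congrArg (padicValNat p) hid
  rw [padicValNat.mul (by omega) (Nat.choose_pos (by omega)).ne',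
    padicValNat.mul (Nat.choose_pos hik).ne' hi.ne'] at this
  omega

theorem padicValNat_choose_pow_add {j : ℕ} (hk : 0 < k) (hj : p ^ j ∣ k) :
    padicValNat p (k.choose (p ^ j)) + j = padicValNat p k := by
  obtain ⟨a, rfl⟩ := hj
  have hpj : 0 < p ^ j := Nat.pow_pos hp.out.pos
  have h := padicValNat_choose_add_padicValNat (p := p) (Nat.le_of_dvd hk ⟨a, rfl⟩) hpj
  rw [padicValNat.prime_pow, padicValNat.eq_zero_of_not_dvd
    (not_dvd_choose_pow_mul_sub_one j (Nat.pos_of_mul_pos_left hk))] at h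
  omega

theorem exists_pow_le_padicValNat_choose_le (hi : 0 < i) (hik : i ≤ k) :
    ∃ t, p ^ t ≤ i ∧ padicValNat p (k.choose (p ^ t)) ≤ padicValNat p (k.choose i) := by
  have hk : 0 < k := hi.trans_le hik
  have hlog : p ^ Nat.log p i ≤ i := Nat.pow_log_le_self p hi.ne'
  rcases le_total (padicValNat p k) (Nat.log p i) with h | h
  · refine ⟨padicValNat p k, (Nat.pow_le_pow_right hp.out.pos h).trans hlog, ?_⟩
    have := padicValNat_choose_pow_add hk (pow_padicValNat_dvd (p := p) (n := k))
    omega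
  · refine ⟨Nat.log p i, hlog, ?_⟩
    have h1 := padicValNat_choose_pow_add (p := p) hk
      ((pow_dvd_pow p h).trans pow_padicValNat_dvd)
    have h2 := padicValNat_choose_add_padicValNat (p := p) hik hi
    have h3 := padicValNat_le_nat_log (p := p) i
    omega

end Nat

namespace AddValuation

variable {K : Type*} [Field K] (v : AddValuation K (WithTop ℤ))

theorem natCast_nonneg (t : ℕ) : 0 ≤ v t := by
  rw [← nsmul_one, ← Finset.card_range t, ← Finset.sum_const]
  exact v.map_le_sum fun _ _ => v.map_one.ge

theorem intCast_nonneg (a : ℤ) : 0 ≤ v a := by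
  obtain ⟨t, rfl | rfl⟩ := Int.eq_nat_or_neg a <;> simp [natCast_nonneg]

theorem natCast_eq_zero_of_not_dvd {p : ℕ} (hp : p.Prime) (hvp : 0 < v p) {u : ℕ}
    (hu : ¬ p ∣ u) : v u = 0 := by
  obtain ⟨a, b, hab⟩ := Nat.isCoprime_iff_coprime.2 ((hp.coprime_iff_not_dvd.2 hu).symm)
  have hsum : (a * u + b * p : K) = 1 := by exact_mod_cast congrArg (Int.cast : ℤ → K) hab
  refine le_antisymm (not_lt.1 fun hpos => ?_) (natCast_nonneg v u)
  have h1 : 0 < v (a * u + b * p : K) :=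
    v.map_lt_add (by rw [map_mul]; exact hpos.trans_le (le_add_of_nonneg_left (intCast_nonneg v a)))
      (by rw [map_mul]; exact hvp.trans_le (le_add_of_nonneg_left (intCast_nonneg v b)))
  rw [hsum, v.map_one] at h1
  exact h1.false

theorem natCast_eq_padicValNat_nsmul {p : ℕ} [Fact p.Prime] (hvp : 0 < v p) {t : ℕ}
    (ht : t ≠ 0) : v t = padicValNat p t • v p := by
  obtain ⟨u, hu⟩ := pow_padicValNat_dvd (p := p) (n := t)
  have hnd : ¬ p ∣ u := fun ⟨c, hc⟩ =>
    pow_succ_padicValNat_not_dvd ht ⟨c, by rw [pow_succ, mul_assoc, ← hc]; exact hu⟩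
  have hcast : (t : K) = (p : K) ^ padicValNat p t * u := by
    rw [← Nat.cast_pow, ← Nat.cast_mul, ← hu]
  rw [hcast, map_mul, map_pow, natCast_eq_zero_of_not_dvd v Fact.out hvp hnd, add_zero]

theorem zpow_eq_of_eq_one {x : K} (hx : v x = 1) (z : ℤ) : v (x ^ z) = z := by
  obtain ⟨t, rfl | rfl⟩ := Int.eq_nat_or_neg z <;> simp [hx]

theorem map_sum_eq_inf {ι : Type*} {s : Finset ι} {f : ι → K}
    (h : ∀ a ∈ s, ∀ b ∈ s, v (f a) = v (f b) → v (f a) ≠ ⊤ → a = b) :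
    v (∑ i ∈ s, f i) = s.inf fun i => v (f i) := by
  classical
  rcases s.eq_empty_or_nonempty with rfl | hs
  · simp
  obtain ⟨a, ha, hmin⟩ := s.exists_mem_eq_inf hs fun i => v (f i)
  have hle : ∀ b ∈ s, v (f a) ≤ v (f b) := fun b hb => by rw [← hmin]; exact Finset.inf_le hb
  rw [hmin]
  rcases eq_or_ne (v (f a)) ⊤ with htop | htop
  · rw [htop]
    exact top_unique (htop ▸ v.map_le_sum hle)
  rw [← Finset.add_sum_erase s f ha, v.map_add_eq_of_lt_left]
  refine v.map_lt_sum htop fun b hb => (hle b (Finset.mem_of_mem_erase hb)).lt_of_ne fun he => ?_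
  exact Finset.ne_of_mem_erase hb (h a ha b (Finset.mem_of_mem_erase hb) he htop).symm

end AddValuation

namespace WithTop

theorem add_coe_sub_eq_zero_iff (x : WithTop ℤ) (a b : ℤ) :
    x + ((a - b : ℤ) : WithTop ℤ) = 0 ↔ x + a = b := by
  induction x using WithTop.recTopCoe
  · simp
  · norm_cast; omega

theorem eq_coe_sub_of_add_eq {x : WithTop ℤ} {a b : ℤ} (h : x + a = b) :
    x = ((b - a : ℤ) : WithTop ℤ) := by
  induction x using WithTop.recTopCoe
  · simp at h
  · norm_cast at h ⊢; omega

end WithTop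

namespace Polynomial

variable {R : Type*} [CommSemiring R] {p : ℕ} [Fact p.Prime] [CharP R p] {f : R[X]}

theorem eval_add_of_support_pow (hf : ∀ i ∈ f.support, ∃ t, i = p ^ t) (x y : R) :
    f.eval (x + y) = f.eval x + f.eval y := by
  simp only [eval_eq_sum, sum_def, ← Finset.sum_add_distrib]
  refine Finset.sum_congr rfl fun i hi => ?_
  obtain ⟨t, rfl⟩ := hf i hi
  rw [add_pow_char_pow, mul_add]

theorem eval_natCast_mul_of_support_pow (hf : ∀ i ∈ f.support, ∃ t, i = p ^ t) (k : ℕ) (x : R) :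
    f.eval (k * x) = k * f.eval x := by
  simp only [eval_eq_sum, sum_def, Finset.mul_sum]
  refine Finset.sum_congr rfl fun i hi => ?_
  obtain ⟨t, rfl⟩ := hf i hi
  rw [mul_pow, ← iterateFrobenius_def p t, map_natCast, mul_left_comm]

end Polynomial

namespace RamificationStmt18

variable {K L : Type*} [Field K] [Field L] [Algebra K L]
  {v : AddValuation K (WithTop ℤ)} {w : AddValuation L (WithTop ℤ)} {φ : K[X]} {n m : ℕ} {α : L}

structure IsEisensteinRoot (v : AddValuation K (WithTop ℤ)) (w : AddValuation L (WithTop ℤ))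
    (φ : K[X]) (n : ℕ) (α : L) : Prop where
  natDegree_eq : φ.natDegree = n
  isEisenstein : IsEisenstein v φ
  aeval_eq_zero : aeval α φ = 0
  valuation_root : w α = 1
  valuation_algebraMap : ∀ x, w (algebraMap K L x) = n • v x

noncomputable def rhoTerm (φ : K[X]) (α : L) (n k i : ℕ) : L :=
  algebraMap K L ((k.choose i : K) * φ.coeff k) * α ^ ((k : ℤ) - n)

theorem rho_eq_sum_rhoTerm (i : ℕ) : rho φ α n i = ∑ k ∈ Finset.Icc i n, rhoTerm φ α n k i := by
  simp [rho, rhoTerm]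

theorem rho_zero (hdeg : φ.natDegree = n) (hroot : aeval α φ = 0) (hα : α ≠ 0) :
    rho φ α n 0 = 0 := by
  have h : rho φ α n 0 = aeval α φ * (α ^ n)⁻¹ := by
    rw [aeval_eq_sum_range, hdeg, Finset.sum_mul, rho, Finset.range_eq_Ico,
      Finset.Ico_add_one_right_eq_Icc]
    refine Finset.sum_congr rfl fun k _ => ?_
    rw [zpow_sub₀ hα, zpow_natCast, zpow_natCast, Algebra.smul_def]
    simp [div_eq_mul_inv, mul_assoc]
  rw [h, hroot, zero_mul]

theorem rho_self (hmonic : φ.Monic) (hdeg : φ.natDegree = n) : rho φ α n n = 1 := by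
  simp [rho, ← hdeg, hmonic.coeff_natDegree]

theorem valuation_rhoTerm (hα : w α = 1) (hw : ∀ x, w (algebraMap K L x) = n • v x) (k i : ℕ) :
    w (rhoTerm φ α n k i) = n • v ((k.choose i : K) * φ.coeff k) + ((k - n : ℤ) : WithTop ℤ) := by
  rw [rhoTerm, AddValuation.map_mul, hw, w.zpow_eq_of_eq_one hα]

theorem valuation_rhoTerm_nonneg (h : IsEisensteinRoot v w φ n α) {k : ℕ} (hk : k ≤ n) (i : ℕ) :
    0 ≤ w (rhoTerm φ α n k i) := by
  obtain ⟨hdeg, ⟨hmonic, hcoeff, -⟩, -, hα, hw⟩ := h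
  rw [valuation_rhoTerm hα hw, AddValuation.map_mul]
  rcases hk.lt_or_eq with hk | rfl
  · have h1 : (1 : WithTop ℤ) ≤ v (k.choose i : K) + v (φ.coeff k) :=
      le_add_of_nonneg_of_le (v.natCast_nonneg _) (hcoeff k (hdeg ▸ hk))
    calc (0 : WithTop ℤ) ≤ ((k : ℤ) : WithTop ℤ) := by exact_mod_cast (k.cast_nonneg : (0 : ℤ) ≤ k)
      _ = ((n : ℤ) : WithTop ℤ) + ((k - n : ℤ) : WithTop ℤ) := by rw [← WithTop.coe_add]; ring_nf
      _ ≤ _ := by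
        gcongr
        simpa using nsmul_le_nsmul_right h1 n
  · rw [← hdeg, hmonic.coeff_natDegree, AddValuation.map_one, add_zero, sub_self,
      WithTop.coe_zero, add_zero]
    exact nsmul_nonneg (v.natCast_nonneg _) _

theorem valuation_rho_nonneg (h : IsEisensteinRoot v w φ n α) (i : ℕ) : 0 ≤ w (rho φ α n i) := by
  rw [rho_eq_sum_rhoTerm]
  exact w.map_le_sum fun k hk => valuation_rhoTerm_nonneg h (Finset.mem_Icc.1 hk).2 i

theorem eq_of_valuation_rhoTerm_eq (hα : w α = 1) (hw : ∀ x, w (algebraMap K L x) = n • v x)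
    {i a b : ℕ} (hi : 0 < i) (ha : a ∈ Finset.Icc i n) (hb : b ∈ Finset.Icc i n)
    (heq : w (rhoTerm φ α n a i) = w (rhoTerm φ α n b i)) (htop : w (rhoTerm φ α n a i) ≠ ⊤) :
    a = b := by
  have hcoe : ∀ k, w (rhoTerm φ α n k i) ≠ ⊤ →
      ∃ x : ℤ, w (rhoTerm φ α n k i) = ((n * x + (k - n) : ℤ) : WithTop ℤ) := by
    intro k hk
    obtain ⟨x, hx⟩ := WithTop.ne_top_iff_exists.1
      (v.ne_top_iff.2 fun h0 : (k.choose i : K) * φ.coeff k = 0 => hk (by simp [rhoTerm, h0]))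
    refine ⟨x, ?_⟩
    rw [valuation_rhoTerm hα hw, ← hx, ← WithTop.coe_nsmul, ← WithTop.coe_add, nsmul_eq_mul]
  obtain ⟨x, hx⟩ := hcoe a htop
  obtain ⟨y, hy⟩ := hcoe b (heq ▸ htop)
  rw [hx, hy, WithTop.coe_eq_coe] at heq
  rw [Finset.mem_Icc] at ha hb
  have h0 := Int.eq_zero_of_abs_lt_dvd (m := n) (x := b - a) ⟨x - y, by linear_combination -heq⟩
    (abs_sub_lt_iff.2 ⟨by omega, by omega⟩)
  omega

theorem valuation_rho_eq_inf (hα : w α = 1) (hw : ∀ x, w (algebraMap K L x) = n • v x)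
    {i : ℕ} (hi : 0 < i) :
    w (rho φ α n i) = (Finset.Icc i n).inf fun k => w (rhoTerm φ α n k i) := by
  rw [rho_eq_sum_rhoTerm]
  exact w.map_sum_eq_inf fun a ha b hb => eq_of_valuation_rhoTerm_eq hα hw hi ha hb

theorem exists_pow_le_valuation_rhoTerm_le {p : ℕ} [Fact p.Prime] (hvp : 0 < v p) (hα : w α = 1)
    (hw : ∀ x, w (algebraMap K L x) = n • v x) {i k : ℕ} (hi : 0 < i) (hik : i ≤ k) :
    ∃ t, p ^ t ≤ i ∧ w (rhoTerm φ α n k (p ^ t)) ≤ w (rhoTerm φ α n k i) := by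
  obtain ⟨t, hti, ht⟩ := Nat.exists_pow_le_padicValNat_choose_le (p := p) hi hik
  refine ⟨t, hti, ?_⟩
  rw [valuation_rhoTerm hα hw, valuation_rhoTerm hα hw, AddValuation.map_mul, AddValuation.map_mul,
    v.natCast_eq_padicValNat_nsmul hvp (Nat.choose_pos (hti.trans hik)).ne',
    v.natCast_eq_padicValNat_nsmul hvp (Nat.choose_pos hik).ne']
  gcongr

theorem valuation_rho_pow_padicValNat_le {p : ℕ} [Fact p.Prime] (hvp : 0 < v p)
    (h : IsEisensteinRoot v w φ n α) (hn : 0 < n) :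
    w (rho φ α n (p ^ padicValNat p n)) ≤ 0 := by
  obtain ⟨hdeg, ⟨hmonic, -, -⟩, -, hα, hw⟩ := h
  have hpn : p ^ padicValNat p n ≤ n := Nat.le_of_dvd hn pow_padicValNat_dvd
  have hv : padicValNat p (n.choose (p ^ padicValNat p n)) = 0 := by
    have := Nat.padicValNat_choose_pow_add hn (pow_padicValNat_dvd (p := p)); omega
  rw [valuation_rho_eq_inf hα hw (Nat.pow_pos (Fact.out : p.Prime).pos)]
  refine (Finset.inf_le (Finset.mem_Icc.2 ⟨hpn, le_rfl⟩)).trans_eq ?_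
  rw [valuation_rhoTerm hα hw, ← hdeg, hmonic.coeff_natDegree, mul_one, hdeg,
    v.natCast_eq_padicValNat_nsmul hvp (Nat.choose_pos hpn).ne', hv]
  simp

theorem contExp_le {i : ℕ} (hi : i ≤ n) (m : ℕ) :
    contExp w φ α n m ≤ w (rho φ α n i) + ((i * m : ℕ) : WithTop ℤ) :=
  Finset.inf_le (Finset.mem_range.2 (Nat.lt_succ_of_le hi))

theorem exists_add_eq_contExp (m : ℕ) :
    ∃ i ≤ n, w (rho φ α n i) + ((i * m : ℕ) : WithTop ℤ) = contExp w φ α n m := by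
  obtain ⟨i, hi, h⟩ := (Finset.range (n + 1)).exists_mem_eq_inf ⟨0, by simp⟩
    fun i => w (rho φ α n i) + ((i * m : ℕ) : WithTop ℤ)
  exact ⟨i, Nat.lt_succ_iff.1 (Finset.mem_range.1 hi), h.symm⟩

theorem IsEisensteinRoot.contExp_ne_top (h : IsEisensteinRoot v w φ n α) (m : ℕ) :
    contExp w φ α n m ≠ ⊤ :=
  ne_top_of_le_ne_top (by simp [rho_self h.isEisenstein.1 h.natDegree_eq]) (contExp_le le_rfl m)

theorem pos_of_add_eq_contExp (h : IsEisensteinRoot v w φ n α) {i : ℕ}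
    (hic : w (rho φ α n i) + ((i * m : ℕ) : WithTop ℤ) = contExp w φ α n m) : 0 < i := by
  refine Nat.pos_of_ne_zero fun hi0 => h.contExp_ne_top m ?_
  have hα0 : α ≠ 0 := fun h0 => by simpa [h0] using h.valuation_root
  rw [← hic, hi0, rho_zero h.natDegree_eq h.aeval_eq_zero hα0, AddValuation.map_zero, top_add]

theorem le_pow_padicValNat_of_add_eq_contExp {p : ℕ} [Fact p.Prime] (hvp : 0 < v p)
    (h : IsEisensteinRoot v w φ n α) (hn : 0 < n) (hm : 0 < m) {i : ℕ}
    (hic : w (rho φ α n i) + ((i * m : ℕ) : WithTop ℤ) = contExp w φ α n m) :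
    i ≤ p ^ padicValNat p n := by
  by_contra! hlt
  refine lt_irrefl (contExp w φ α n m) ?_
  calc contExp w φ α n m
      ≤ w (rho φ α n (p ^ padicValNat p n)) + ((p ^ padicValNat p n * m : ℕ) : WithTop ℤ) :=
        contExp_le (Nat.le_of_dvd hn pow_padicValNat_dvd) m
    _ ≤ ((p ^ padicValNat p n * m : ℕ) : WithTop ℤ) := by
        simpa using add_le_add_left (valuation_rho_pow_padicValNat_le hvp h hn) _
    _ < ((i * m : ℕ) : WithTop ℤ) := by exact_mod_cast Nat.mul_lt_mul_of_pos_right hlt hm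
    _ ≤ w (rho φ α n i) + ((i * m : ℕ) : WithTop ℤ) :=
        le_add_of_nonneg_left (valuation_rho_nonneg h i)
    _ = contExp w φ α n m := hic

theorem exists_eq_pow_of_add_eq_contExp {p : ℕ} [Fact p.Prime] (hvp : 0 < v p)
    (h : IsEisensteinRoot v w φ n α) (hn : 0 < n) (hm : 0 < m) {i : ℕ} (hi : i ≤ n)
    (hic : w (rho φ α n i) + ((i * m : ℕ) : WithTop ℤ) = contExp w φ α n m) :
    ∃ t ≤ padicValNat p n, i = p ^ t := by
  have hα := h.valuation_root
  have hw := h.valuation_algebraMap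
  have hi0 := pos_of_add_eq_contExp h hic
  have hρi : w (rho φ α n i) ≠ ⊤ := fun ht =>
    h.contExp_ne_top m (by rw [← hic, ht, top_add])
  obtain ⟨k, hk, hki⟩ := (Finset.Icc i n).exists_mem_eq_inf ⟨n, Finset.mem_Icc.2 ⟨hi, le_rfl⟩⟩
    fun k => w (rhoTerm φ α n k i)
  rw [← valuation_rho_eq_inf hα hw hi0] at hki
  obtain ⟨hik, hkn⟩ := Finset.mem_Icc.1 hk
  obtain ⟨t, hti, htk⟩ := exists_pow_le_valuation_rhoTerm_le hvp hα hw hi0 hik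
  obtain rfl : p ^ t = i := by
    refine hti.eq_or_lt.resolve_right fun hlt => lt_irrefl (contExp w φ α n m) ?_
    calc contExp w φ α n m ≤ w (rho φ α n (p ^ t)) + ((p ^ t * m : ℕ) : WithTop ℤ) :=
          contExp_le (hti.trans hi) m
      _ ≤ w (rhoTerm φ α n k (p ^ t)) + ((p ^ t * m : ℕ) : WithTop ℤ) := by
          rw [valuation_rho_eq_inf hα hw (Nat.pow_pos (Fact.out : p.Prime).pos)]
          gcongr
          exact Finset.inf_le (Finset.mem_Icc.2 ⟨hti.trans hik, hkn⟩)
      _ < w (rhoTerm φ α n k i) + ((i * m : ℕ) : WithTop ℤ) :=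
          WithTop.add_lt_add_of_le_of_lt (ne_top_of_le_ne_top (hki ▸ hρi) htk) htk
            (by exact_mod_cast Nat.mul_lt_mul_of_pos_right hlt hm)
      _ = contExp w φ α n m := by rw [← hki, hic]
  exact ⟨t, (Nat.pow_le_pow_iff_right (Fact.out : p.Prime).one_lt).1
    (le_pow_padicValNat_of_add_eq_contExp hvp h hn hm hic), rfl⟩

section Residual

variable {𝕜 : Type*} [Field 𝕜] {res : vintegers w →+* 𝕜}

theorem vred_ne_zero_iff (hres : ∀ x : vintegers w, res x = 0 ↔ 0 < w (x : L)) {x : L} :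
    vred w res x ≠ 0 ↔ w x = 0 := by
  unfold vred
  split_ifs with hx
  · rw [Ne, hres, not_lt]
    exact ⟨fun h => le_antisymm h hx, fun h => h.le⟩
  · exact iff_of_false (fun h => h rfl) fun h => hx h.ge

theorem coeff_smPoly (i : ℕ) : (SmPoly w res φ α n m).coeff i =
    if i ≤ n then vred w res (rho φ α n i * α ^ ((i * m : ℤ) - contExpZ w φ α n m)) else 0 := by
  simp only [SmPoly, finsetSum_coeff, coeff_C_mul_X_pow, Finset.sum_ite_eq, Finset.mem_range,
    Nat.lt_succ_iff]

theorem coeff_smPoly_ne_zero_iff (hres : ∀ x : vintegers w, res x = 0 ↔ 0 < w (x : L))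
    (hα : w α = 1) (hc : contExp w φ α n m ≠ ⊤) (i : ℕ) :
    (SmPoly w res φ α n m).coeff i ≠ 0 ↔
      i ≤ n ∧ w (rho φ α n i) + ((i * m : ℕ) : WithTop ℤ) = contExp w φ α n m := by
  obtain ⟨c, hc⟩ := WithTop.ne_top_iff_exists.1 hc
  have hcZ : contExpZ w φ α n m = c := by rw [contExpZ, ← hc]; rfl
  rw [coeff_smPoly]
  split_ifs with hi
  · rw [vred_ne_zero_iff hres, AddValuation.map_mul, w.zpow_eq_of_eq_one hα, hcZ,
      WithTop.add_coe_sub_eq_zero_iff, ← hc, ← Nat.cast_mul, WithTop.coe_natCast]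
    exact (and_iff_right hi).symm
  · simp [hi]

theorem contExp_eq_of_segment {k : ℕ} {y : ℤ} (hk : k ≤ n) (hy : w (rho φ α n k) = y)
    (hmin : ∀ i ≤ n, ∀ c : ℤ, w (rho φ α n i) = (c : WithTop ℤ) → y - m * ((i : ℤ) - k) ≤ c) :
    contExp w φ α n m = ((y + k * m : ℤ) : WithTop ℤ) := by
  refine le_antisymm ((contExp_le hk m).trans_eq (by rw [hy]; norm_cast))
    (Finset.le_inf fun i hi => ?_)
  rcases eq_or_ne (w (rho φ α n i)) ⊤ with htop | hne
  · simp [htop]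
  obtain ⟨r, hr⟩ := WithTop.ne_top_iff_exists.1 hne
  have := hmin i (Nat.lt_succ_iff.1 (Finset.mem_range.1 hi)) r hr.symm
  rw [← hr, ← WithTop.coe_natCast, ← WithTop.coe_add, WithTop.coe_le_coe]
  push_cast
  linarith

theorem smPoly_eq_X_pow_mul_of_segment (hres : ∀ x : vintegers w, res x = 0 ↔ 0 < w (x : L))
    (hα : w α = 1) {k len : ℕ} {y : ℤ} (hkn : k + len ≤ n) (hy : w (rho φ α n k) = y)
    (hmin : ∀ i ≤ n, ∀ c : ℤ, w (rho φ α n i) = (c : WithTop ℤ) → y - m * ((i : ℤ) - k) ≤ c)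
    (hleft : ∀ i < k, ∀ c : ℤ, w (rho φ α n i) = (c : WithTop ℤ) → y - m * ((i : ℤ) - k) < c)
    (hright : ∀ i : ℕ, k + len < i → i ≤ n → ∀ c : ℤ, w (rho φ α n i) = (c : WithTop ℤ) →
      y - m * ((i : ℤ) - k) < c) :
    SmPoly w res φ α n m = X ^ k * ∑ j ∈ Finset.range (len + 1),
      C (vred w res (rho φ α n (j + k) * α ^ ((j * m : ℤ) - y))) * X ^ j := by
  have hc := contExp_eq_of_segment (by omega) hy hmin
  have hcZ : contExpZ w φ α n m = y + k * m := by rw [contExpZ, hc]; rfl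
  ext i
  simp only [coeff_X_pow_mul', finsetSum_coeff, coeff_C_mul_X_pow, Finset.sum_ite_eq,
    Finset.mem_range]
  by_cases hi : k ≤ i ∧ i - k < len + 1
  · obtain ⟨j, rfl⟩ := Nat.exists_eq_add_of_le hi.1
    rw [if_pos hi.1, if_pos hi.2, coeff_smPoly, if_pos (by omega), hcZ, Nat.add_sub_cancel_left,
      add_comm j k]
    congr 3
    push_cast
    ring
  rw [show (if k ≤ i then (if i - k < len + 1 then _ else 0) else 0) = (0 : 𝕜) by
    split_ifs <;> tauto]
  by_contra hne
  obtain ⟨hin, heq⟩ := (coeff_smPoly_ne_zero_iff hres hα (hc ▸ WithTop.coe_ne_top) i).1 hne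
  rw [hc] at heq
  have hr := WithTop.eq_coe_sub_of_add_eq heq
  have hlt : y - m * ((i : ℤ) - k) < y + k * m - (i * m : ℕ) := by
    rcases lt_or_ge i k with hik | hik
    · exact hleft i hik _ hr
    · exact hright i (by omega) hin _ hr
  push_cast at hlt
  linarith

theorem smPoly_eq_C_mul_X_pow_of_unique {p : ℕ} [Fact p.Prime] (hvp : 0 < v p)
    (h : IsEisensteinRoot v w φ n α) (hres : ∀ x : vintegers w, res x = 0 ↔ 0 < w (x : L))
    (hn : 0 < n) (hm : 0 < m)
    (huniq : ∀ i j : ℕ, i ≤ n → j ≤ n →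
      w (rho φ α n i) + ((i * m : ℕ) : WithTop ℤ) = contExp w φ α n m →
      w (rho φ α n j) + ((j * m : ℕ) : WithTop ℤ) = contExp w φ α n m → i = j)
    {s : ℕ} (hs : s ≤ padicValNat p n)
    (hsmin : w (rho φ α n (p ^ s)) + ((p ^ s * m : ℕ) : WithTop ℤ) =
      (Finset.range (padicValNat p n + 1)).inf
        fun r => w (rho φ α n (p ^ r)) + ((p ^ r * m : ℕ) : WithTop ℤ)) :
    ∃ u : 𝕜, u ≠ 0 ∧ SmPoly w res φ α n m = C u * X ^ (p ^ s) := by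
  have hcoeff := coeff_smPoly_ne_zero_iff hres h.valuation_root (h.contExp_ne_top m)
  have hps : p ^ s ≤ n :=
    (Nat.pow_le_pow_right (Fact.out : p.Prime).pos hs).trans (Nat.le_of_dvd hn pow_padicValNat_dvd)
  obtain ⟨i, hi, hic⟩ := exists_add_eq_contExp (w := w) (φ := φ) (α := α) (n := n) m
  obtain ⟨t, ht, rfl⟩ := exists_eq_pow_of_add_eq_contExp hvp h hn hm hi hic
  have hsc : w (rho φ α n (p ^ s)) + ((p ^ s * m : ℕ) : WithTop ℤ) = contExp w φ α n m :=
    le_antisymm (hsmin.trans_le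
      ((Finset.inf_le (Finset.mem_range.2 (Nat.lt_succ_of_le ht))).trans_eq hic)) (contExp_le hps m)
  refine ⟨_, (hcoeff _).2 ⟨hps, hsc⟩, ext fun j => ?_⟩
  rw [coeff_C_mul_X_pow]
  split_ifs with hj
  · rw [hj]
  · by_contra hne
    obtain ⟨hjn, hjc⟩ := (hcoeff j).1 hne
    exact hj (huniq _ _ hjn hps hjc hsc)

theorem exists_eq_pow_of_mem_support_smPoly {p : ℕ} [Fact p.Prime] (hvp : 0 < v p)
    (h : IsEisensteinRoot v w φ n α) (hres : ∀ x : vintegers w, res x = 0 ↔ 0 < w (x : L))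
    (hn : 0 < n) (hm : 0 < m) : ∀ i ∈ (SmPoly w res φ α n m).support, ∃ t : ℕ, i = p ^ t := by
  intro i hi
  obtain ⟨hin, hic⟩ := (coeff_smPoly_ne_zero_iff hres h.valuation_root (h.contExp_ne_top m) i).1
    (mem_support_iff.1 hi)
  obtain ⟨t, -, rfl⟩ := exists_eq_pow_of_add_eq_contExp hvp h hn hm hin hic
  exact ⟨t, rfl⟩

end Residual

end RamificationStmt18

open RamificationStmt18 in
theorem stmt18_general {p : ℕ} (hp : p.Prime) {K L 𝕜 : Type*} [Field K] [Field L]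
    [Field 𝕜] [Algebra K L]
    (v : AddValuation K (WithTop ℤ))
    (hresidue_char : 0 < v (p : K)) (hchar𝕜 : (p : 𝕜) = 0)
    (w : AddValuation L (WithTop ℤ))
    (res : vintegers w →+* 𝕜)
    (hres_ker : ∀ x : vintegers w, res x = 0 ↔ 0 < w (x : L))
    (φ : Polynomial K) (n : ℕ) (hn : 0 < n) (hdeg : φ.natDegree = n)
    (hEis : IsEisenstein v φ)
    (α : L) (hroot : Polynomial.aeval α φ = 0) (hα : w α = ((1 : ℤ) : WithTop ℤ))
    (hcompat : ∀ x : K, w (algebraMap K L x) = n • v x)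
    (m : ℕ) (hm : 0 < m) :
    -- (a): a segment of slope −m contributes `x^k · A(x)`
    (∀ (k len : ℕ) (y : ℤ), 0 < len → k + len ≤ n →
      w (rho φ α n k) = (y : WithTop ℤ) →
      w (rho φ α n (k + len)) = ((y - m * len : ℤ) : WithTop ℤ) →
      (∀ i ≤ n, ∀ c : ℤ, w (rho φ α n i) = (c : WithTop ℤ) →
        y - m * ((i : ℤ) - k) ≤ c) →
      (∀ i < k, ∀ c : ℤ, w (rho φ α n i) = (c : WithTop ℤ) →
        y - m * ((i : ℤ) - k) < c) →
      (∀ i : ℕ, k + len < i → i ≤ n → ∀ c : ℤ, w (rho φ α n i) = (c : WithTop ℤ) →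
        y - m * ((i : ℤ) - k) < c) →
      SmPoly w res φ α n m =
        Polynomial.X ^ k *
          ∑ j ∈ Finset.range (len + 1),
            Polynomial.C (vred w res (rho φ α n (j + k) * α ^ ((j * m : ℤ) - y))) *
              Polynomial.X ^ j) ∧
    -- (b): if the (−m)-component is a single point, `S_m` is a monomial `u·x^{p^s}`
    ((∀ i j : ℕ, i ≤ n → j ≤ n →
        w (rho φ α n i) + ((i * m : ℕ) : WithTop ℤ) = contExp w φ α n m →
        w (rho φ α n j) + ((j * m : ℕ) : WithTop ℤ) = contExp w φ α n m → i = j) →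
      ∀ s : ℕ, s ≤ padicValNat p n →
        (w (rho φ α n (p ^ s)) + ((p ^ s * m : ℕ) : WithTop ℤ) =
          (Finset.range (padicValNat p n + 1)).inf
            (fun r => w (rho φ α n (p ^ r)) + ((p ^ r * m : ℕ) : WithTop ℤ))) →
        ∃ u : 𝕜, u ≠ 0 ∧ SmPoly w res φ α n m = Polynomial.C u * Polynomial.X ^ (p ^ s)) ∧
    -- (c): S_m is an additive polynomial
    (∀ i ∈ (SmPoly w res φ α n m).support, ∃ t : ℕ, i = p ^ t) ∧
    -- (d): the induced map is 𝔽_p-linear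
    ((∀ x y : 𝕜, (SmPoly w res φ α n m).eval (x + y) =
        (SmPoly w res φ α n m).eval x + (SmPoly w res φ α n m).eval y) ∧
      (∀ (k : ℕ) (x : 𝕜), (SmPoly w res φ α n m).eval ((k : 𝕜) * x) =
        (k : 𝕜) * (SmPoly w res φ α n m).eval x)) := by
  have := Fact.mk hp
  have : CharP 𝕜 p := (CharP.charP_iff_prime_eq_zero hp).2 hchar𝕜
  have h : IsEisensteinRoot v w φ n α := ⟨hdeg, hEis, hroot, hα, hcompat⟩
  have hsupp := exists_eq_pow_of_mem_support_smPoly hresidue_char h hres_ker hn hm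
  exact ⟨fun _ _ _ _ hkn hy _ hmin hleft hright =>
      smPoly_eq_X_pow_mul_of_segment hres_ker hα hkn hy hmin hleft hright,
    fun huniq _ hs hsmin =>
      smPoly_eq_C_mul_X_pow_of_unique hresidue_char h hres_ker hn hm huniq hs hsmin,
    hsupp, Polynomial.eval_add_of_support_pow hsupp,
    Polynomial.eval_natCast_mul_of_support_pow hsupp⟩

open RamificationStmt18 in
/-- Let `φ ∈ O_K[x]` be Eisenstein of degree `n` with root `α`, `ρ` its
ramification polynomial, `R` its ramification polygon, and for `m ∈ ℤ_{>0}` let `S_m` be the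
residual polynomial of the `(−m)`-component of `R`.  Then:
(a) if `R` has a segment of integral slope `−m` with left endpoint `(k, y)` and residual
polynomial `A`, then `S_m(x) = x^k·A(x)`;
(b) if `R` has no segment of slope `−m` then `S_m(x) = x^{p^s}` (up to the unit residue of the
single minimal coefficient) where `s ≤ v_p(n)` is such that `v_α(ρ_{p^s}) + p^s·m` is minimal
among `v_α(ρ_{p^r}) + p^r·m`, `0 ≤ r ≤ v_p(n)`;
(c) `S_m` is an additive polynomial: every monomial has exponent a power of `p`;
(d) the induced map `S_m : 𝕜 → 𝕜` is `𝔽_p`-linear. -/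
theorem stmt18 {p : ℕ} (hp : p.Prime) {K L 𝕜 : Type*} [Field K] [CharZero K] [Field L]
    [Field 𝕜] [Algebra K L]
    (v : AddValuation K (WithTop ℤ)) (π : K) (hπ : v π = ((1 : ℤ) : WithTop ℤ))
    (hresidue_char : 0 < v (p : K)) (hchar𝕜 : (p : 𝕜) = 0)
    (w : AddValuation L (WithTop ℤ))
    (res : vintegers w →+* 𝕜) (hres_surj : Function.Surjective res)
    (hres_ker : ∀ x : vintegers w, res x = 0 ↔ 0 < w (x : L))
    (φ : Polynomial K) (n : ℕ) (hn : 0 < n) (hdeg : φ.natDegree = n)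
    (hEis : IsEisenstein v φ)
    (α : L) (hroot : Polynomial.aeval α φ = 0) (hα : w α = ((1 : ℤ) : WithTop ℤ))
    (hcompat : ∀ x : K, w (algebraMap K L x) = n • v x)
    (m : ℕ) (hm : 0 < m) :
    -- (a): a segment of slope −m contributes `x^k · A(x)`
    (∀ (k len : ℕ) (y : ℤ), 0 < len → k + len ≤ n →
      w (rho φ α n k) = (y : WithTop ℤ) →
      w (rho φ α n (k + len)) = ((y - m * len : ℤ) : WithTop ℤ) →
      (∀ i ≤ n, ∀ c : ℤ, w (rho φ α n i) = (c : WithTop ℤ) →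
        y - m * ((i : ℤ) - k) ≤ c) →
      (∀ i < k, ∀ c : ℤ, w (rho φ α n i) = (c : WithTop ℤ) →
        y - m * ((i : ℤ) - k) < c) →
      (∀ i : ℕ, k + len < i → i ≤ n → ∀ c : ℤ, w (rho φ α n i) = (c : WithTop ℤ) →
        y - m * ((i : ℤ) - k) < c) →
      SmPoly w res φ α n m =
        Polynomial.X ^ k *
          ∑ j ∈ Finset.range (len + 1),
            Polynomial.C (vred w res (rho φ α n (j + k) * α ^ ((j * m : ℤ) - y))) *
              Polynomial.X ^ j) ∧
    -- (b): if the (−m)-component is a single point, `S_m` is a monomial `u·x^{p^s}`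
    ((∀ i j : ℕ, i ≤ n → j ≤ n →
        w (rho φ α n i) + ((i * m : ℕ) : WithTop ℤ) = contExp w φ α n m →
        w (rho φ α n j) + ((j * m : ℕ) : WithTop ℤ) = contExp w φ α n m → i = j) →
      ∀ s : ℕ, s ≤ padicValNat p n →
        (w (rho φ α n (p ^ s)) + ((p ^ s * m : ℕ) : WithTop ℤ) =
          (Finset.range (padicValNat p n + 1)).inf
            (fun r => w (rho φ α n (p ^ r)) + ((p ^ r * m : ℕ) : WithTop ℤ))) →
        ∃ u : 𝕜, u ≠ 0 ∧ SmPoly w res φ α n m = Polynomial.C u * Polynomial.X ^ (p ^ s)) ∧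
    -- (c): S_m is an additive polynomial
    (∀ i ∈ (SmPoly w res φ α n m).support, ∃ t : ℕ, i = p ^ t) ∧
    -- (d): the induced map is 𝔽_p-linear
    ((∀ x y : 𝕜, (SmPoly w res φ α n m).eval (x + y) =
        (SmPoly w res φ α n m).eval x + (SmPoly w res φ α n m).eval y) ∧
      (∀ (k : ℕ) (x : 𝕜), (SmPoly w res φ α n m).eval ((k : 𝕜) * x) =
        (k : 𝕜) * (SmPoly w res φ α n m).eval x)) :=
  stmt18_general hp v hresidue_char hchar𝕜 w res hres_ker φ n hn hdeg hEis α hroot hα hcompat m hm
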